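/- Let G be a group, let Γ ≤ G and K ≤ G be subgroups, and let V̌ be a vector space on which Γ acts via ρ. If g_1, …, g_h is a complete set of representatives for the double coset space Γ\G/K, then the evaluation map F ↦ (F(g_1), …, F(g_h)) is a linear isomorphism from the space of Γ-left-equivariant, K-right-invariant functions { F : G → V̌ : F(γ g k) = ρ(γ) F(g) for γ ∈ Γ, k ∈ K } onto ⊕_{i=1}^h V̌^{Γ_i}, where Γ_i = Γ ∩ g_i K g_i^{-1} and V̌^{Γ_i} = { v ∈ V̌ : ρ(γ) v = v for all γ ∈ Γ with γ g_i ∈ g_i K }. -/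
import Mathlib


/-- If `g₁, …, g_h` is a complete set of representatives for `Γ\G/K`, then evaluation at
the `gᵢ` is a bijection from the space of functions `F : G → V̌` with
`F(γ g k) = ρ(γ) F(g)` onto `⊕ᵢ V̌^{Γᵢ}`, where `Γᵢ = Γ ∩ gᵢ K gᵢ⁻¹`. -/
theorem double_coset_evaluation_bijective (k : Type) [Field k] (G : Type) [Group G]
    (Γ K : Subgroup G) (Vd : Type) [AddCommGroup Vd] [Module k Vd]
    (ρ : Representation k Γ Vd) (h : ℕ) (gi : Fin h → G)
    (hrep : ∀ x : G, ∃! i : Fin h, ∃ (γ : Γ) (kk : K), x = (γ : G) * gi i * (kk : G)) :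
    Set.BijOn (fun (F : G → Vd) (i : Fin h) => F (gi i))
      {F | ∀ (γ : Γ) (g : G) (kk : K), F ((γ : G) * g * (kk : G)) = ρ γ (F g)}
      {v | ∀ (i : Fin h) (γ : Γ),
        (∃ kk : K, (γ : G) * gi i = gi i * (kk : G)) → ρ γ (v i) = v i} := by
  classical
  refine ⟨?_, ?_, ?_⟩
  · -- MapsTo
    intro F hF i γ ⟨kk, hk⟩
    have h1 := hF 1 (gi i * (kk : G)⁻¹) kk
    have h2 := hF γ (gi i * (kk : G)⁻¹) kk
    have h3 := hF 1 (gi i) kk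
    have e1 : ((1 : Γ) : G) * (gi i * (kk : G)⁻¹) * (kk : G) = gi i := by
      simp only [OneMemClass.coe_one]; group
    have e2 : (γ : G) * (gi i * (kk : G)⁻¹) * (kk : G) = (γ : G) * gi i := by group
    have e3 : ((1 : Γ) : G) * gi i * (kk : G) = gi i * (kk : G) := by
      simp only [OneMemClass.coe_one, one_mul]
    rw [e1, map_one] at h1
    rw [e2, hk] at h2
    rw [e3, map_one] at h3
    simp only [Module.End.one_apply] at h1 h3
    show ρ γ (F (gi i)) = F (gi i)
    rw [h1, ← h2, h3]
    exact h1
  · -- InjOn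
    intro F hF F' hF' heq
    funext x
    obtain ⟨i, ⟨γ, kk, hx⟩, -⟩ := hrep x
    rw [hx, hF, hF']
    exact congrArg _ (congrFun heq i)
  · -- SurjOn
    intro v hv
    choose idx hspec using hrep
    choose γ0 kk0 hdec using fun x => (hspec x).1
    set F : G → Vd := fun x => ρ (γ0 x) (v (idx x)) with hFdef
    have key : ∀ (x : G) (i : Fin h) (γ : Γ) (kk : K),
        x = (γ : G) * gi i * (kk : G) → F x = ρ γ (v i) := by
      intro x i γ kk hx
      have hi : idx x = i := ((hspec x).2 i ⟨γ, kk, hx⟩).symm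
      have hA : (γ0 x : G) * gi (idx x) * (kk0 x : G) = (γ : G) * gi i * (kk : G) :=
        (hdec x).symm.trans hx
      rw [hi] at hA
      have hB : ((((γ0 x)⁻¹ * γ : Γ)) : G) * gi i = gi i * ((kk0 x * kk⁻¹ : K) : G) := by
        push_cast
        have := congrArg (fun z => ((γ0 x : G))⁻¹ * z * ((kk : G))⁻¹) hA
        simp only [mul_assoc, inv_mul_cancel_left, mul_inv_cancel_right,
          mul_inv_cancel, mul_one] at this ⊢
        exact this.symm
      have hfix := hv i ((γ0 x)⁻¹ * γ) ⟨kk0 x * kk⁻¹, hB⟩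
      have : ρ γ (v i) = ρ (γ0 x) (ρ ((γ0 x)⁻¹ * γ) (v i)) := by
        rw [← Module.End.mul_apply, ← map_mul, mul_inv_cancel_left]
      rw [this, hfix]
      show ρ (γ0 x) (v (idx x)) = ρ (γ0 x) (v i)
      rw [hi]
    refine ⟨F, ?_, ?_⟩
    · intro γ g kk
      have hg := hdec g
      have hx : (γ : G) * g * (kk : G) =
          ((γ * γ0 g : Γ) : G) * gi (idx g) * ((kk0 g * kk : K) : G) := by
        conv_lhs => rw [hg]
        push_cast; group
      rw [key _ _ _ _ hx]
      show ρ (γ * γ0 g) (v (idx g)) = ρ γ (ρ (γ0 g) (v (idx g)))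
      rw [map_mul]; rfl
    · funext i
      have := key (gi i) i 1 1 (by simp)
      simpa using this
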